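/- For any n ≥ 0, the coefficients of q^0 through q^n of the formal power series F_{n+1}(q)/F_n(q) ∈ ℚ[[q]] are independent of n in the following sense: for all m ≥ n, the coefficient of q^k in F_{m+1}/F_m equals the coefficient of q^k in F_{n+1}/F_n for all 0 ≤ k ≤ n. -/

import Mathlib

open PowerSeries

noncomputable def qFibS : ℕ → PowerSeries ℚ
  | 0 => 1
  | 1 => 1
  | n + 2 => qFibS (n + 1) + PowerSeries.X * qFibS n

/-! Cassini's identity `F_{n+2} F_n - F_{n+1}² = (-1)ⁿ qⁿ⁺¹` says that consecutive ratios
`F_{n+2}/F_{n+1}` and `F_{n+1}/F_n` differ by a multiple of `qⁿ⁺¹`, so they agree up to `qⁿ`. -/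

theorem PowerSeries.coeff_mul_inv_eq_of_X_pow_dvd {K : Type*} [Field K] {a b c d : K⟦X⟧}
    (hb : constantCoeff b ≠ 0) (hd : constantCoeff d ≠ 0) {N : ℕ} (h : X ^ N ∣ a * d - c * b)
    {k : ℕ} (hk : k < N) : coeff k (a * b⁻¹) = coeff k (c * d⁻¹) := by
  have hdiff : a * b⁻¹ - c * d⁻¹ = (a * d - c * b) * (b⁻¹ * d⁻¹) := by
    linear_combination (c * d⁻¹) * PowerSeries.mul_inv_cancel b hb
      - (a * b⁻¹) * PowerSeries.mul_inv_cancel d hd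
  have hX : X ^ N ∣ a * b⁻¹ - c * d⁻¹ := hdiff ▸ dvd_mul_of_dvd_left h _
  rw [← sub_eq_zero, ← map_sub]
  exact X_pow_dvd_iff.mp hX k hk

theorem constantCoeff_qFibS : ∀ n, constantCoeff (qFibS n) = 1
  | 0 => by simp [qFibS]
  | 1 => by simp [qFibS]
  | n + 2 => by simp [qFibS, constantCoeff_qFibS (n + 1), constantCoeff_qFibS n]

theorem qFibS_cassini : ∀ n, qFibS (n + 2) * qFibS n - qFibS (n + 1) ^ 2
    = (-1 : ℚ⟦X⟧) ^ n * X ^ (n + 1)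
  | 0 => by simp [qFibS]
  | n + 1 => by
    have h := qFibS_cassini n
    simp only [qFibS] at h ⊢
    linear_combination (-X : ℚ⟦X⟧) * h

theorem coeff_qFibS_ratio_succ {m k : ℕ} (hk : k ≤ m) :
    coeff k (qFibS (m + 2) * (qFibS (m + 1))⁻¹) = coeff k (qFibS (m + 1) * (qFibS m)⁻¹) := by
  refine coeff_mul_inv_eq_of_X_pow_dvd (by simp [constantCoeff_qFibS])
    (by simp [constantCoeff_qFibS]) ⟨(-1) ^ m, ?_⟩ (Nat.lt_succ_of_le hk)
  rw [← sq, qFibS_cassini, mul_comm]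

theorem qFib_ratio_coeff_stable (n m k : ℕ) (hnm : n ≤ m) (hk : k ≤ n) :
    PowerSeries.coeff k (qFibS (m + 1) * (qFibS m)⁻¹) =
      PowerSeries.coeff k (qFibS (n + 1) * (qFibS n)⁻¹) := by
  induction m, hnm using Nat.le_induction with
  | base => rfl
  | succ m hnm ih => rw [coeff_qFibS_ratio_succ (hk.trans hnm), ih]
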